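/- Fix Q > 0, ξ′ ∈ (0,1) and q₊ ∈ ℝ. For m₁, m₂ > 0 define x̂ = ξ′Q²/(Q² + (m₁+m₂)²), ŝ = Q²(1/x̂ − 1), ζ₁ = 1 + (m₂²−m₁²)/ŝ, ζ₂ = Δ(ŝ, m₂², m₁²)/ŝ, ζ± = (ζ₁±ζ₂)/2, and the massive boson–gluon-fusion F₄ Wilson coefficient H₄(m₁,m₂) = C₄·ln((1−ζ₋)/(1−ζ₊)) + D₄·ln(ζ₊/ζ₋) + E₄·(ζ₊−ζ₋), with C₄ = −2q₊(m₁²/Q²)x̂², D₄ = −2q₊(m₂²/Q²)x̂², and E₄ = −2q₊(x̂−1)x̂. Then the limit as (m₁,m₂) → (0⁺,0⁺) exists and lim H₄(m₁,m₂) = 2 q₊ ξ′(1−ξ′), i.e. the massive coefficient converges to q₊ times the massless MS-bar gluon coefficient function C_{G,4}^{(1)}(ξ′) = 2ξ′(1−ξ′). -/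

import Mathlib

open Filter Set Topology

/-- The triangle (Källén) function `Δ(a,b,c) = √(a²+b²+c²−2ab−2ac−2bc)`. -/
noncomputable def triangleFn (a b c : ℝ) : ℝ :=
  Real.sqrt (a ^ 2 + b ^ 2 + c ^ 2 - 2 * a * b - 2 * a * c - 2 * b * c)

/-- The massive boson–gluon-fusion `F₄` Wilson coefficient. -/
noncomputable def H4gf (Q ξ' qp m₁ m₂ : ℝ) : ℝ :=
  let xh := ξ' * Q ^ 2 / (Q ^ 2 + (m₁ + m₂) ^ 2)
  let sh := Q ^ 2 * (1 / xh - 1)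
  let ζ₁ := 1 + (m₂ ^ 2 - m₁ ^ 2) / sh
  let ζ₂ := triangleFn sh (m₂ ^ 2) (m₁ ^ 2) / sh
  let ζp := (ζ₁ + ζ₂) / 2
  let ζm := (ζ₁ - ζ₂) / 2
  let C₄ := -2 * qp * (m₁ ^ 2 / Q ^ 2) * xh ^ 2
  let D₄ := -2 * qp * (m₂ ^ 2 / Q ^ 2) * xh ^ 2
  let E₄ := -2 * qp * (xh - 1) * xh
  C₄ * Real.log ((1 - ζm) / (1 - ζp)) + D₄ * Real.log (ζp / ζm) + E₄ * (ζp - ζm)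

lemma core (s m₁ m₂ t : ℝ) (hm₁ : 0 < m₁) (hm₂ : 0 < m₂) (hlt : (m₁ + m₂) ^ 2 < s)
    (htpos : 0 < t)
    (ht2 : t ^ 2 = s ^ 2 + (m₂ ^ 2) ^ 2 + (m₁ ^ 2) ^ 2 - 2 * s * m₂ ^ 2 - 2 * s * m₁ ^ 2
      - 2 * m₂ ^ 2 * m₁ ^ 2) :
    Real.log ((1 - ((1 + (m₂ ^ 2 - m₁ ^ 2) / s) - t / s) / 2) /
              (1 - ((1 + (m₂ ^ 2 - m₁ ^ 2) / s) + t / s) / 2))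
      = 2 * Real.log (1 - ((1 + (m₂ ^ 2 - m₁ ^ 2) / s) - t / s) / 2)
        + Real.log s - 2 * Real.log m₁ ∧
    Real.log ((((1 + (m₂ ^ 2 - m₁ ^ 2) / s) + t / s) / 2) /
              (((1 + (m₂ ^ 2 - m₁ ^ 2) / s) - t / s) / 2))
      = 2 * Real.log (((1 + (m₂ ^ 2 - m₁ ^ 2) / s) + t / s) / 2)
        + Real.log s - 2 * Real.log m₂ := by
  have hs : 0 < s := lt_trans (by positivity) hlt
  set zp := ((1 + (m₂ ^ 2 - m₁ ^ 2) / s) + t / s) / 2 with hzp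
  set zm := ((1 + (m₂ ^ 2 - m₁ ^ 2) / s) - t / s) / 2 with hzm
  have prod1 : (1 - zm) * (1 - zp) * s = m₁ ^ 2 := by
    have h : (1 - zm) * (1 - zp) * s = ((s - m₂ ^ 2 + m₁ ^ 2) ^ 2 - t ^ 2) / (4 * s) := by
      rw [hzm, hzp]; field_simp; ring
    rw [h, ht2]; field_simp; ring
  have prod2 : zm * zp * s = m₂ ^ 2 := by
    have h : zm * zp * s = ((s + m₂ ^ 2 - m₁ ^ 2) ^ 2 - t ^ 2) / (4 * s) := by
      rw [hzm, hzp]; field_simp; ring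
    rw [h, ht2]; field_simp; ring
  have hm1s : m₁ ^ 2 < s := lt_of_le_of_lt (by nlinarith) hlt
  have hm2s : m₂ ^ 2 < s := lt_of_le_of_lt (by nlinarith) hlt
  have hzppos : 0 < zp := by
    have hz : zp = (s + m₂ ^ 2 - m₁ ^ 2 + t) / (2 * s) := by
      rw [hzp]; field_simp; ring
    rw [hz]
    apply div_pos _ (by linarith)
    nlinarith [sq_nonneg m₂]
  have hzmlt1 : zm < 1 := by
    rw [hzm]
    have h1 : (m₂ ^ 2 - m₁ ^ 2) / s < 1 := by
      rw [div_lt_one hs]; nlinarith [sq_nonneg m₁]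
    have h2 : 0 < t / s := div_pos htpos hs
    linarith
  clear_value zp zm
  clear hzp hzm ht2 htpos
  have hzmpos : 0 < zm := by
    have hz : zm = m₂ ^ 2 / (zp * s) := by
      rw [eq_div_iff (by positivity)]
      linear_combination prod2
    rw [hz]; positivity
  have hzplt1 : zp < 1 := by
    have h1m : 1 - zp = m₁ ^ 2 / ((1 - zm) * s) := by
      rw [eq_div_iff (by nlinarith)]
      linear_combination prod1
    nlinarith [div_pos (by positivity : (0:ℝ) < m₁ ^ 2)
      (by nlinarith : (0:ℝ) < (1 - zm) * s)]
  have h1m_ne : (1 : ℝ) - zm ≠ 0 := by linarith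
  have h1p_ne : (1 : ℝ) - zp ≠ 0 := by linarith
  constructor
  · have h' : (1 - zm) / (1 - zp) = (1 - zm) ^ 2 * s / m₁ ^ 2 := by
      rw [div_eq_div_iff h1p_ne (by positivity)]
      linear_combination (-(1 - zm)) * prod1
    rw [h', Real.log_div (mul_ne_zero (pow_ne_zero 2 h1m_ne) hs.ne') (by positivity),
      Real.log_mul (pow_ne_zero 2 h1m_ne) hs.ne', Real.log_pow, Real.log_pow]
    push_cast; ring
  · have h' : zp / zm = zp ^ 2 * s / m₂ ^ 2 := by
      rw [div_eq_div_iff hzmpos.ne' (by positivity)]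
      linear_combination (-zp) * prod2
    rw [h', Real.log_div (mul_ne_zero (pow_ne_zero 2 hzppos.ne') hs.ne') (by positivity),
      Real.log_mul (pow_ne_zero 2 hzppos.ne') hs.ne', Real.log_pow, Real.log_pow]
    push_cast; ring

lemma logid (s m₁ m₂ : ℝ) (hm₁ : 0 < m₁) (hm₂ : 0 < m₂) (hlt : (m₁ + m₂) ^ 2 < s) :
    Real.log ((1 - ((1 + (m₂ ^ 2 - m₁ ^ 2) / s) - triangleFn s (m₂ ^ 2) (m₁ ^ 2) / s) / 2) /
              (1 - ((1 + (m₂ ^ 2 - m₁ ^ 2) / s) + triangleFn s (m₂ ^ 2) (m₁ ^ 2) / s) / 2))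
      = 2 * Real.log (1 - ((1 + (m₂ ^ 2 - m₁ ^ 2) / s) - triangleFn s (m₂ ^ 2) (m₁ ^ 2) / s) / 2)
        + Real.log s - 2 * Real.log m₁ ∧
    Real.log ((((1 + (m₂ ^ 2 - m₁ ^ 2) / s) + triangleFn s (m₂ ^ 2) (m₁ ^ 2) / s) / 2) /
              (((1 + (m₂ ^ 2 - m₁ ^ 2) / s) - triangleFn s (m₂ ^ 2) (m₁ ^ 2) / s) / 2))
      = 2 * Real.log (((1 + (m₂ ^ 2 - m₁ ^ 2) / s) + triangleFn s (m₂ ^ 2) (m₁ ^ 2) / s) / 2)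
        + Real.log s - 2 * Real.log m₂ := by
  have hA : 0 < s ^ 2 + (m₂ ^ 2) ^ 2 + (m₁ ^ 2) ^ 2 - 2 * s * m₂ ^ 2 - 2 * s * m₁ ^ 2
      - 2 * m₂ ^ 2 * m₁ ^ 2 := by
    have hAeq : s ^ 2 + (m₂ ^ 2) ^ 2 + (m₁ ^ 2) ^ 2 - 2 * s * m₂ ^ 2 - 2 * s * m₁ ^ 2
        - 2 * m₂ ^ 2 * m₁ ^ 2 = (s - (m₁ + m₂) ^ 2) * (s - (m₁ - m₂) ^ 2) := by ring
    have h1 : (m₁ - m₂) ^ 2 < s := lt_of_le_of_lt (by nlinarith) hlt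
    rw [hAeq]; nlinarith
  exact core s m₁ m₂ _ hm₁ hm₂ hlt (Real.sqrt_pos.mpr hA) (Real.sq_sqrt hA.le)

/-- The massive boson–gluon-fusion `F₄` Wilson coefficient converges, in the joint
massless limit `(m₁,m₂) → (0⁺,0⁺)`, to `qp` times the massless MS-bar gluon
coefficient function `C_{G,4}^{(1)}(ξ′) = 2ξ′(1−ξ′)`. -/
theorem gf_F4_massless_limit (Q ξ' qp : ℝ) (hQ : 0 < Q) (h0 : 0 < ξ') (h1 : ξ' < 1) :
    Tendsto (fun m : ℝ × ℝ => H4gf Q ξ' qp m.1 m.2)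
      (nhdsWithin (0, 0) (Set.Ioi 0 ×ˢ Set.Ioi 0))
      (nhds (2 * qp * ξ' * (1 - ξ'))) := by
  set F := nhdsWithin ((0:ℝ), (0:ℝ)) (Set.Ioi 0 ×ˢ Set.Ioi 0) with hF
  set xh : ℝ × ℝ → ℝ := fun m => ξ' * Q ^ 2 / (Q ^ 2 + (m.1 + m.2) ^ 2) with hxh
  set sh : ℝ × ℝ → ℝ := fun m => Q ^ 2 * (1 / xh m - 1) with hsh
  set zp : ℝ × ℝ → ℝ := fun m =>
    ((1 + (m.2 ^ 2 - m.1 ^ 2) / sh m) + triangleFn (sh m) (m.2 ^ 2) (m.1 ^ 2) / sh m) / 2 with hzp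
  set zm : ℝ × ℝ → ℝ := fun m =>
    ((1 + (m.2 ^ 2 - m.1 ^ 2) / sh m) - triangleFn (sh m) (m.2 ^ 2) (m.1 ^ 2) / sh m) / 2 with hzm
  set G : ℝ × ℝ → ℝ := fun m =>
      -2 * qp * (m.1 ^ 2 / Q ^ 2) * xh m ^ 2 * (2 * Real.log (1 - zm m) + Real.log (sh m))
    + 2 * qp / Q ^ 2 * xh m ^ 2 * (2 * (m.1 * (m.1 * Real.log m.1)))
    + (-2 * qp * (m.2 ^ 2 / Q ^ 2) * xh m ^ 2 * (2 * Real.log (zp m) + Real.log (sh m))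
    + 2 * qp / Q ^ 2 * xh m ^ 2 * (2 * (m.2 * (m.2 * Real.log m.2)))
    + -2 * qp * (xh m - 1) * xh m * (zp m - zm m)) with hG
  set K : ℝ := Q ^ 2 * (1 / ξ' - 1) with hK
  have hKpos : 0 < K := by
    rw [hK]
    apply mul_pos (by positivity)
    have : 1 < 1 / ξ' := by rw [lt_div_iff₀ h0]; linarith
    linarith
  -- the eventual equality
  have heq : G =ᶠ[F] fun m : ℝ × ℝ => H4gf Q ξ' qp m.1 m.2 := by
    filter_upwards [self_mem_nhdsWithin] with m hm
    obtain ⟨hm1, hm2⟩ := hm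
    simp only [Set.mem_Ioi] at hm1 hm2
    have hQ2 : (0:ℝ) < Q ^ 2 + (m.1 + m.2) ^ 2 := by positivity
    have hxhpos : 0 < xh m := by rw [hxh]; positivity
    have hshval : sh m = (Q ^ 2 * (1 - ξ') + (m.1 + m.2) ^ 2) / ξ' := by
      rw [hsh, hxh]; field_simp; ring
    have hlt : (m.1 + m.2) ^ 2 < sh m := by
      rw [hshval, lt_div_iff₀ h0]
      nlinarith [sq_nonneg (m.1 + m.2)]
    obtain ⟨hl1, hl2⟩ := logid (sh m) m.1 m.2 hm1 hm2 hlt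
    have hl1' : Real.log ((1 - zm m) / (1 - zp m))
        = 2 * Real.log (1 - zm m) + Real.log (sh m) - 2 * Real.log m.1 := hl1
    have hl2' : Real.log (zp m / zm m)
        = 2 * Real.log (zp m) + Real.log (sh m) - 2 * Real.log m.2 := hl2
    show G m =
        -2 * qp * (m.1 ^ 2 / Q ^ 2) * xh m ^ 2 * Real.log ((1 - zm m) / (1 - zp m))
      + -2 * qp * (m.2 ^ 2 / Q ^ 2) * xh m ^ 2 * Real.log (zp m / zm m)
      + -2 * qp * (xh m - 1) * xh m * (zp m - zm m)
    rw [hl1', hl2', hG]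
    ring
  apply Tendsto.congr' heq
  -- limits of building blocks
  have tm1 : Tendsto (fun m : ℝ × ℝ => m.1) F (𝓝 0) :=
    (continuous_fst.tendsto _).mono_left nhdsWithin_le_nhds
  have tm2 : Tendsto (fun m : ℝ × ℝ => m.2) F (𝓝 0) :=
    (continuous_snd.tendsto _).mono_left nhdsWithin_le_nhds
  have tb : Tendsto (fun m : ℝ × ℝ => m.2 ^ 2) F (𝓝 0) := by
    simpa using tm2.pow 2
  have tc : Tendsto (fun m : ℝ × ℝ => m.1 ^ 2) F (𝓝 0) := by
    simpa using tm1.pow 2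
  have tsum : Tendsto (fun m : ℝ × ℝ => (m.1 + m.2) ^ 2) F (𝓝 0) := by
    simpa using (tm1.add tm2).pow 2
  have txh : Tendsto xh F (𝓝 ξ') := by
    have h : Tendsto xh F (𝓝 (ξ' * Q ^ 2 / (Q ^ 2 + 0))) :=
      tendsto_const_nhds.div (tendsto_const_nhds.add tsum)
        (by positivity : (Q:ℝ) ^ 2 + 0 ≠ 0)
    have hv : ξ' * Q ^ 2 / (Q ^ 2 + 0) = ξ' := by
      rw [add_zero, mul_div_assoc, div_self (by positivity), mul_one]
    rw [hv] at h
    exact h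
  have tsh : Tendsto sh F (𝓝 K) :=
    tendsto_const_nhds.mul ((tendsto_const_nhds.div txh h0.ne').sub tendsto_const_nhds)
  have tA : Tendsto (fun m : ℝ × ℝ => sh m ^ 2 + (m.2 ^ 2) ^ 2 + (m.1 ^ 2) ^ 2
      - 2 * sh m * m.2 ^ 2 - 2 * sh m * m.1 ^ 2 - 2 * m.2 ^ 2 * m.1 ^ 2) F (𝓝 (K ^ 2)) := by
    have h : Tendsto (fun m : ℝ × ℝ => sh m ^ 2 + (m.2 ^ 2) ^ 2 + (m.1 ^ 2) ^ 2
        - 2 * sh m * m.2 ^ 2 - 2 * sh m * m.1 ^ 2 - 2 * m.2 ^ 2 * m.1 ^ 2) F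
        (𝓝 (K ^ 2 + 0 ^ 2 + 0 ^ 2 - 2 * K * 0 - 2 * K * 0 - 2 * 0 * 0)) :=
      ((((tsh.pow 2).add (tb.pow 2)).add (tc.pow 2)).sub
        ((tendsto_const_nhds.mul tsh).mul tb)).sub
        ((tendsto_const_nhds.mul tsh).mul tc) |>.sub
        ((tendsto_const_nhds.mul tb).mul tc)
    simpa using h
  have ttri : Tendsto (fun m : ℝ × ℝ => triangleFn (sh m) (m.2 ^ 2) (m.1 ^ 2)) F (𝓝 K) := by
    have h := (Real.continuous_sqrt.tendsto (K ^ 2)).comp tA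
    simpa [triangleFn, Function.comp_def, Real.sqrt_sq hKpos.le] using h
  have tz1 : Tendsto (fun m : ℝ × ℝ => 1 + (m.2 ^ 2 - m.1 ^ 2) / sh m) F (𝓝 1) := by
    simpa using tendsto_const_nhds.add ((tb.sub tc).div tsh hKpos.ne')
  have tz2 : Tendsto (fun m : ℝ × ℝ => triangleFn (sh m) (m.2 ^ 2) (m.1 ^ 2) / sh m) F (𝓝 1) := by
    have h := ttri.div tsh hKpos.ne'
    rw [div_self hKpos.ne'] at h
    exact h
  have tzp : Tendsto zp F (𝓝 1) := by
    have h := (tz1.add tz2).div_const 2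
    rw [hzp]; norm_num at h ⊢; exact h
  have tzm : Tendsto zm F (𝓝 0) := by
    have h := (tz1.sub tz2).div_const 2
    rw [hzm]; norm_num at h ⊢; exact h
  have tlog1m : Tendsto (fun m : ℝ × ℝ => Real.log (1 - zm m)) F (𝓝 0) := by
    have h := (tendsto_const_nhds.sub tzm).log (by norm_num : (1:ℝ) - 0 ≠ 0)
    simpa using h
  have tlogp : Tendsto (fun m : ℝ × ℝ => Real.log (zp m)) F (𝓝 0) := by
    have h := tzp.log one_ne_zero
    simpa using h
  have tlogs : Tendsto (fun m : ℝ × ℝ => Real.log (sh m)) F (𝓝 (Real.log K)) :=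
    tsh.log hKpos.ne'
  have tml1 : Tendsto (fun m : ℝ × ℝ => m.1 * (m.1 * Real.log m.1)) F (𝓝 0) := by
    have h0' := (Real.continuous_mul_log.tendsto 0).comp tm1
    have h := tm1.mul h0'
    simpa [Function.comp_def] using h
  have tml2 : Tendsto (fun m : ℝ × ℝ => m.2 * (m.2 * Real.log m.2)) F (𝓝 0) := by
    have h0' := (Real.continuous_mul_log.tendsto 0).comp tm2
    have h := tm2.mul h0'
    simpa [Function.comp_def] using h
  -- assemble
  have t1 : Tendsto (fun m : ℝ × ℝ =>
      -2 * qp * (m.1 ^ 2 / Q ^ 2) * xh m ^ 2 * (2 * Real.log (1 - zm m) + Real.log (sh m)))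
      F (𝓝 (-2 * qp * (0 / Q ^ 2) * ξ' ^ 2 * (2 * 0 + Real.log K))) :=
    ((tendsto_const_nhds.mul (tc.div_const _)).mul (txh.pow 2)).mul
      ((tendsto_const_nhds.mul tlog1m).add tlogs)
  have t2 : Tendsto (fun m : ℝ × ℝ =>
      2 * qp / Q ^ 2 * xh m ^ 2 * (2 * (m.1 * (m.1 * Real.log m.1))))
      F (𝓝 (2 * qp / Q ^ 2 * ξ' ^ 2 * (2 * 0))) :=
    (tendsto_const_nhds.mul (txh.pow 2)).mul (tendsto_const_nhds.mul tml1)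
  have t3 : Tendsto (fun m : ℝ × ℝ =>
      -2 * qp * (m.2 ^ 2 / Q ^ 2) * xh m ^ 2 * (2 * Real.log (zp m) + Real.log (sh m)))
      F (𝓝 (-2 * qp * (0 / Q ^ 2) * ξ' ^ 2 * (2 * 0 + Real.log K))) :=
    ((tendsto_const_nhds.mul (tb.div_const _)).mul (txh.pow 2)).mul
      ((tendsto_const_nhds.mul tlogp).add tlogs)
  have t4 : Tendsto (fun m : ℝ × ℝ =>
      2 * qp / Q ^ 2 * xh m ^ 2 * (2 * (m.2 * (m.2 * Real.log m.2))))
      F (𝓝 (2 * qp / Q ^ 2 * ξ' ^ 2 * (2 * 0))) :=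
    (tendsto_const_nhds.mul (txh.pow 2)).mul (tendsto_const_nhds.mul tml2)
  have t5 : Tendsto (fun m : ℝ × ℝ => -2 * qp * (xh m - 1) * xh m * (zp m - zm m))
      F (𝓝 (-2 * qp * (ξ' - 1) * ξ' * (1 - 0))) :=
    (((tendsto_const_nhds.mul (txh.sub tendsto_const_nhds)).mul txh)).mul (tzp.sub tzm)
  have tG := (t1.add t2).add ((t3.add t4).add t5)
  rw [hG]
  convert tG using 2
  ring
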